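/- Suppose L = 2 and f is a twice continuously differentiable positive probability density on ℝ with f'(x) → 0 and f'(x)f''(x)/f(x) → 0 as x → ±∞, and f'' not identically zero, with the relevant integrals finite. Then C_{B,2} := 2κ₂ ∫ (f'(x)f'''(x)/f(x) − f'(x)²f''(x)/f(x)²) dx = −2κ₂ ∫ f''(x)²/f(x) dx < 0 for any κ₂ > 0. Consequently the optimal tempering parameter w* = 1 − (C_{B,2}/(2C_{B,1}))(h*)² satisfies w* > 1 whenever h* > 0 and C_{B,1} > 0. -/

import Mathlib

/-!
`f' f'' / f` has derivative `f' f''' / f - f'² f'' / f² + f''² / f` and vanishes at `±∞`, so the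
integral of that derivative is zero. This turns the cross coefficient into `-2κ ∫ f''² / f`, which
is negative because `f''² / f` is continuous, nonnegative and not identically zero.
-/

open MeasureTheory Filter

theorem ContDiff.hasDerivAt_iteratedDeriv {𝕜 : Type*} [NontriviallyNormedField 𝕜] {f : 𝕜 → 𝕜}
    {n : WithTop ℕ∞} (m : ℕ) (hf : ContDiff 𝕜 n f) (hmn : m < n) (x : 𝕜) :
    HasDerivAt (iteratedDeriv m f) (iteratedDeriv (m + 1) f x) x := by
  rw [iteratedDeriv_succ]
  exact (hf.differentiable_iteratedDeriv m hmn x).hasDerivAt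

theorem hasDerivAt_deriv_mul_iteratedDeriv_two_div {f : ℝ → ℝ} (hf : ContDiff ℝ 3 f) {x : ℝ}
    (hx : f x ≠ 0) :
    HasDerivAt (fun y => deriv f y * iteratedDeriv 2 f y / f y)
      ((deriv f x * iteratedDeriv 3 f x / f x
        - deriv f x ^ 2 * iteratedDeriv 2 f x / f x ^ 2) + iteratedDeriv 2 f x ^ 2 / f x) x := by
  have h₀ := hf.hasDerivAt_iteratedDeriv 0 (by norm_num) x
  have h₁ := hf.hasDerivAt_iteratedDeriv 1 (by norm_num) x
  have h₂ := hf.hasDerivAt_iteratedDeriv 2 (by norm_num) x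
  simp only [iteratedDeriv_zero, iteratedDeriv_one, Nat.reduceAdd] at h₀ h₁ h₂
  refine ((h₁.mul h₂).div h₀ hx).congr_deriv ?_
  simp only [Pi.mul_apply]
  field_simp
  ring

theorem integral_deriv_mul_iteratedDeriv_three_div_sub {f : ℝ → ℝ} (hf : ContDiff ℝ 3 f)
    (hf₀ : ∀ x, f x ≠ 0)
    (hatTop : Tendsto (fun x => deriv f x * iteratedDeriv 2 f x / f x) atTop (nhds 0))
    (hatBot : Tendsto (fun x => deriv f x * iteratedDeriv 2 f x / f x) atBot (nhds 0))
    (hint₁ : Integrable (fun x =>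
      deriv f x * iteratedDeriv 3 f x / f x - deriv f x ^ 2 * iteratedDeriv 2 f x / f x ^ 2))
    (hint₂ : Integrable (fun x => iteratedDeriv 2 f x ^ 2 / f x)) :
    ∫ x, (deriv f x * iteratedDeriv 3 f x / f x - deriv f x ^ 2 * iteratedDeriv 2 f x / f x ^ 2)
      = -∫ x, iteratedDeriv 2 f x ^ 2 / f x := by
  have hsum := integral_of_hasDerivAt_of_tendsto
    (fun x => hasDerivAt_deriv_mul_iteratedDeriv_two_div hf (hf₀ x)) (hint₁.add hint₂)
    hatBot hatTop
  rw [integral_add hint₁ hint₂, sub_zero] at hsum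
  linarith

theorem stmt5_general
    (f : ℝ → ℝ) (hfpos : ∀ x, 0 < f x) (hf : ContDiff ℝ 3 f)
    (hd2 : Tendsto (fun x => deriv f x * iteratedDeriv 2 f x / f x) atTop (nhds 0))
    (hd2' : Tendsto (fun x => deriv f x * iteratedDeriv 2 f x / f x) atBot (nhds 0))
    (hne : ∃ x, iteratedDeriv 2 f x ≠ 0)
    (hint1 : Integrable (fun x =>
      deriv f x * iteratedDeriv 3 f x / f x
        - (deriv f x) ^ 2 * iteratedDeriv 2 f x / (f x) ^ 2))
    (hint2 : Integrable (fun x => (iteratedDeriv 2 f x) ^ 2 / f x))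
    (κ : ℝ) (hκ : 0 < κ)
    (CB2 : ℝ)
    (hCB2 : CB2 = 2 * κ * ∫ x,
      (deriv f x * iteratedDeriv 3 f x / f x
        - (deriv f x) ^ 2 * iteratedDeriv 2 f x / (f x) ^ 2))
    (CB1 hstar : ℝ) (hCB1 : 0 < CB1) (hhstar : 0 < hstar)
    (wstar : ℝ) (hwstar : wstar = 1 - CB2 / (2 * CB1) * hstar ^ 2) :
    CB2 = -2 * κ * ∫ x, (iteratedDeriv 2 f x) ^ 2 / f x ∧
      CB2 < 0 ∧ 1 < wstar := by
  have hCB2_eq : CB2 = -2 * κ * ∫ x, iteratedDeriv 2 f x ^ 2 / f x := by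
    rw [hCB2, integral_deriv_mul_iteratedDeriv_three_div_sub hf (fun x => (hfpos x).ne') hd2 hd2'
      hint1 hint2]
    ring
  obtain ⟨x₀, hx₀⟩ := hne
  have hpos : 0 < ∫ x, iteratedDeriv 2 f x ^ 2 / f x :=
    integral_pos_of_integrable_nonneg_nonzero (x := x₀)
      (((hf.continuous_iteratedDeriv 2 (by norm_num)).pow 2).div hf.continuous
        fun x => (hfpos x).ne')
      hint2 (fun x => div_nonneg (sq_nonneg _) (hfpos x).le)
      (div_ne_zero (pow_ne_zero 2 hx₀) (hfpos x₀).ne')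
  have hCB2_neg : CB2 < 0 := by
    rw [hCB2_eq]
    nlinarith
  refine ⟨hCB2_eq, hCB2_neg, ?_⟩
  have hratio : CB2 / (2 * CB1) < 0 := div_neg_of_neg_of_pos hCB2_neg (by positivity)
  rw [hwstar]
  nlinarith [mul_neg_of_neg_of_pos hratio (pow_pos hhstar 2)]

/-- For `L = 2`, the cross coefficient
`C_{B,2} = 2κ₂ ∫ (f'f'''/f - f'²f''/f²) dx = -2κ₂ ∫ f''²/f dx < 0`,
hence the optimal tempering parameter `w* = 1 - (C_{B,2}/(2C_{B,1}))(h*)²`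
satisfies `w* > 1`. -/
theorem stmt5
    (f : ℝ → ℝ) (hfpos : ∀ x, 0 < f x) (hf : ContDiff ℝ 3 f)
    (hdens : ∫ x, f x = 1)
    (hd1 : Tendsto (fun x => deriv f x) atTop (nhds 0))
    (hd1' : Tendsto (fun x => deriv f x) atBot (nhds 0))
    (hd2 : Tendsto (fun x => deriv f x * iteratedDeriv 2 f x / f x) atTop (nhds 0))
    (hd2' : Tendsto (fun x => deriv f x * iteratedDeriv 2 f x / f x) atBot (nhds 0))
    (hne : ∃ x, iteratedDeriv 2 f x ≠ 0)
    (hint1 : Integrable (fun x =>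
      deriv f x * iteratedDeriv 3 f x / f x
        - (deriv f x) ^ 2 * iteratedDeriv 2 f x / (f x) ^ 2))
    (hint2 : Integrable (fun x => (iteratedDeriv 2 f x) ^ 2 / f x))
    (κ : ℝ) (hκ : 0 < κ)
    (CB2 : ℝ)
    (hCB2 : CB2 = 2 * κ * ∫ x,
      (deriv f x * iteratedDeriv 3 f x / f x
        - (deriv f x) ^ 2 * iteratedDeriv 2 f x / (f x) ^ 2))
    (CB1 hstar : ℝ) (hCB1 : 0 < CB1) (hhstar : 0 < hstar)
    (wstar : ℝ) (hwstar : wstar = 1 - CB2 / (2 * CB1) * hstar ^ 2) :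
    CB2 = -2 * κ * ∫ x, (iteratedDeriv 2 f x) ^ 2 / f x ∧
      CB2 < 0 ∧ 1 < wstar :=
  stmt5_general f hfpos hf hd2 hd2' hne hint1 hint2 κ hκ CB2 hCB2 CB1 hstar hCB1 hhstar wstar hwstar
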